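/- Soft local time comparison of ranges: if two sequences (z_1,…,z_m) and (z̃_1,…,z̃_n) are obtained from the same Poisson process η on Σ × [0,∞) via the soft local time construction with soft local time functions G_m and G̃_n respectively, then on the event that G_m(z) ≤ G̃_n(z) for all z ∈ Σ, one has the range inclusion {z_1,…,z_m} ⊆ {z̃_1,…,z̃_n}. -/

import Mathlib

/-! A selected point `(z_i, v_i)` lies on the graph of `G_i ≤ G_m ≤ G̃_n`, hence weakly below
the graph of `G̃_n`; but every point of `η` that the second chain has not selected by time `n`
lies strictly above that graph. So `(z_i, v_i)` is one of the `(z̃_j, ṽ_j)`. -/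

theorem exists_eq_of_mem_of_snd_le {S : Type*} {η : Set (S × ℝ)} {n : ℕ}
    {z : ℕ → S} {v : ℕ → ℝ} {F : S → ℝ}
    (hmin : ∀ q ∈ η, (∀ j, 1 ≤ j → j ≤ n → q ≠ (z j, v j)) → F q.1 < q.2)
    {q : S × ℝ} (hq : q ∈ η) (hle : q.2 ≤ F q.1) :
    ∃ j, 1 ≤ j ∧ j ≤ n ∧ q = (z j, v j) := by
  by_contra! hne
  exact (hmin q hq hne).not_ge hle

theorem soft_local_time_range_inclusion_general {S : Type*} (η : Set (S × ℝ))
    (m n : ℕ) (hn : 1 ≤ n)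
    (z ztilde : ℕ → S) (v vtilde : ℕ → ℝ) (G Gt : ℕ → S → ℝ)
    (hGmono : ∀ i j : ℕ, i ≤ j → ∀ s, G i s ≤ G j s)
    (hmem : ∀ i, 1 ≤ i → i ≤ m → (z i, v i) ∈ η)
    (hsel : ∀ i, 1 ≤ i → i ≤ m → v i = G i (z i))
    (htmin : ∀ i, 1 ≤ i → i ≤ n → ∀ q ∈ η,
      (∀ j, 1 ≤ j → j ≤ i → q ≠ (ztilde j, vtilde j)) → Gt i q.1 < q.2)
    (hcomp : ∀ s : S, G m s ≤ Gt n s) :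
    {s : S | ∃ i, 1 ≤ i ∧ i ≤ m ∧ z i = s} ⊆
      {s : S | ∃ i, 1 ≤ i ∧ i ≤ n ∧ ztilde i = s} := by
  rintro s ⟨i, hi1, him, rfl⟩
  have hle : v i ≤ Gt n (z i) :=
    calc v i = G i (z i) := hsel i hi1 him
      _ ≤ G m (z i) := hGmono i m him (z i)
      _ ≤ Gt n (z i) := hcomp (z i)
  obtain ⟨j, hj1, hjn, hq⟩ :=
    exists_eq_of_mem_of_snd_le (htmin n hn le_rfl) (hmem i hi1 him) hle
  exact ⟨j, hj1, hjn, (congrArg Prod.fst hq).symm⟩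

/-- Soft local time comparison of ranges: if the chains `(z_i)_{i ≤ m}` and
`(z̃_i)_{i ≤ n}` are both obtained from the same point process `η ⊆ Σ × ℝ` by the soft
local time construction — encoded by: the selected points `(z_i, v_i)` belong to `η`,
the selected height satisfies `v_i = G_i(z_i)`, the soft local times are nondecreasing
in the time index, and every point of `η` not yet selected lies strictly above the
current soft local time graph — then `G_m ≤ G̃_n` pointwise on `Σ` implies the
range inclusion `{z_1, …, z_m} ⊆ {z̃_1, …, z̃_n}`. -/
theorem soft_local_time_range_inclusion {S : Type*} (η : Set (S × ℝ))
    (m n : ℕ) (hm : 1 ≤ m) (hn : 1 ≤ n)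
    (z ztilde : ℕ → S) (v vtilde : ℕ → ℝ) (G Gt : ℕ → S → ℝ)
    (hGmono : ∀ i j : ℕ, i ≤ j → ∀ s, G i s ≤ G j s)
    (hGtmono : ∀ i j : ℕ, i ≤ j → ∀ s, Gt i s ≤ Gt j s)
    (hmem : ∀ i, 1 ≤ i → i ≤ m → (z i, v i) ∈ η)
    (hsel : ∀ i, 1 ≤ i → i ≤ m → v i = G i (z i))
    (hmin : ∀ i, 1 ≤ i → i ≤ m → ∀ q ∈ η,
      (∀ j, 1 ≤ j → j ≤ i → q ≠ (z j, v j)) → G i q.1 < q.2)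
    (htmem : ∀ i, 1 ≤ i → i ≤ n → (ztilde i, vtilde i) ∈ η)
    (htsel : ∀ i, 1 ≤ i → i ≤ n → vtilde i = Gt i (ztilde i))
    (htmin : ∀ i, 1 ≤ i → i ≤ n → ∀ q ∈ η,
      (∀ j, 1 ≤ j → j ≤ i → q ≠ (ztilde j, vtilde j)) → Gt i q.1 < q.2)
    (hcomp : ∀ s : S, G m s ≤ Gt n s) :
    {s : S | ∃ i, 1 ≤ i ∧ i ≤ m ∧ z i = s} ⊆
      {s : S | ∃ i, 1 ≤ i ∧ i ≤ n ∧ ztilde i = s} :=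
  soft_local_time_range_inclusion_general η m n hn z ztilde v vtilde G Gt hGmono hmem hsel htmin
    hcomp
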